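/- arXiv:1702.03150 — 9 statements merged into one kernel-verified Lean document; each statement's English description precedes it below -/
import Mathlib

section
/- Let G be a finite group, H ⊆ K subgroups of G, and g ∈ K. Then Pr_g(H,Aut(K)) = (1/(|H|·|Aut(K)|)) · Σ_{x ∈ H, xg ∈ orb_K(x)} |C_{Aut(K)}(x)|, and also Pr_g(H,Aut(K)) = (1/|H|) · Σ_{x ∈ H, xg ∈ orb_K(x)} 1/|orb_K(x)|. -/
open scoped Pointwise Classical

section AutoCommuting

variable {G : Type*} [Group G]

/-- The set of pairs `(x, α) ∈ H × Aut(K)` whose autocommutator `[x,α] = x⁻¹ α(x)` equals `g`. -/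
def autPairs (H K : Subgroup G) (hHK : H ≤ K) (g : G) : Set (↥H × MulAut ↥K) :=
  {p | ((p.1 : G))⁻¹ * ((p.2 ⟨(p.1 : G), hHK p.1.2⟩ : ↥K) : G) = g}

/-- The generalized autocommuting probability `Pr_g(H, Aut(K))`. -/
noncomputable def prAut (H K : Subgroup G) (hHK : H ≤ K) (g : G) : ℚ :=
  (Nat.card (autPairs H K hHK g) : ℚ) /
    ((Nat.card ↥H : ℚ) * (Nat.card (MulAut ↥K) : ℚ))

/-- The orbit `orb_K(x)` of `x ∈ K` under the natural action of `Aut(K)` on `K`. -/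
def orbK (K : Subgroup G) (x : ↥K) : Set ↥K := MulAction.orbit (MulAut ↥K) x

/-- `C_{Aut(K)}(x)`, the set of automorphisms of `K` fixing `x`. -/
def centAut (K : Subgroup G) (x : ↥K) : Set (MulAut ↥K) := {α | α x = x}

/-- `C_{Aut(K)}(H)`, the set of automorphisms of `K` fixing every element of `H`. -/
def centAutH (H K : Subgroup G) (hHK : H ≤ K) : Set (MulAut ↥K) :=
  {α | ∀ x : ↥H, α ⟨(x : G), hHK x.2⟩ = ⟨(x : G), hHK x.2⟩}

/-- `L(H, Aut(K)) = {x ∈ H : [x,α] = 1 for all α ∈ Aut(K)}`, as a subgroup of `H`. -/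
def absCent (H K : Subgroup G) (hHK : H ≤ K) : Subgroup ↥H where
  carrier := {x | ∀ α : MulAut ↥K, α ⟨(x : G), hHK x.2⟩ = ⟨(x : G), hHK x.2⟩}
  one_mem' := by
    intro α
    have h1 : (⟨((1 : ↥H) : G), hHK (1 : ↥H).2⟩ : ↥K) = 1 := rfl
    rw [h1, map_one]
  mul_mem' := by
    intro a b ha hb α
    have h1 : (⟨((a * b : ↥H) : G), hHK (a * b).2⟩ : ↥K)
        = ⟨(a : G), hHK a.2⟩ * ⟨(b : G), hHK b.2⟩ := rfl
    rw [h1, map_mul, ha α, hb α]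
  inv_mem' := by
    intro a ha α
    have h1 : (⟨((a⁻¹ : ↥H) : G), hHK (a⁻¹).2⟩ : ↥K) = (⟨(a : G), hHK a.2⟩ : ↥K)⁻¹ := rfl
    rw [h1, map_inv, ha α]

theorem mem_absCent {H K : Subgroup G} {hHK : H ≤ K} {x : ↥H} :
    x ∈ absCent H K hHK ↔ ∀ α : MulAut ↥K, α ⟨(x : G), hHK x.2⟩ = ⟨(x : G), hHK x.2⟩ :=
  Iff.rfl

/-- `S(H, Aut(K)) = {[x,α] : x ∈ H, α ∈ Aut(K)}`, as a subset of `K`. -/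
def autCommSet (H K : Subgroup G) (hHK : H ≤ K) : Set ↥K :=
  {k | ∃ x : ↥H, ∃ α : MulAut ↥K,
    (⟨(x : G), hHK x.2⟩ : ↥K)⁻¹ * α ⟨(x : G), hHK x.2⟩ = k}

end AutoCommuting

/-!
Grouping the pairs `(x, α)` by `x`, the automorphisms with `[x, α] = g` are those sending `x` to
`x g`. They form a coset of the stabilizer `C_{Aut(K)}(x)` when `x g ∈ orb_K(x)`, and there are
none otherwise; this gives the first formula. The second follows from the orbit–stabilizer theorem
`|Aut(K)| = |orb_K(x)| · |C_{Aut(K)}(x)|`.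
-/
namespace MulAction

variable {M X : Type*} [Group M] [MulAction M X]

theorem card_smul_eq_of_mem_orbit {a b : X} (h : b ∈ orbit M a) :
    Nat.card {m : M // m • a = b} = Nat.card (stabilizer M a) := by
  obtain ⟨n, rfl⟩ := h
  refine Nat.card_congr (Equiv.subtypeEquiv (Equiv.mulLeft n⁻¹) fun m => ?_)
  rw [Equiv.coe_mulLeft, mem_stabilizer_iff, mul_smul, inv_smul_eq_iff]

theorem card_smul_eq (a b : X) [Decidable (b ∈ orbit M a)] :
    Nat.card {m : M // m • a = b} = if b ∈ orbit M a then Nat.card (stabilizer M a) else 0 := by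
  split_ifs with h
  · exact card_smul_eq_of_mem_orbit h
  · have : IsEmpty {m : M // m • a = b} := ⟨fun m => h ⟨m.1, m.2⟩⟩
    exact Nat.card_of_isEmpty

variable (M) in
theorem card_orbit_mul_card_stabilizer (a : X) :
    Nat.card (orbit M a) * Nat.card (stabilizer M a) = Nat.card M := by
  rw [Nat.card_coe_set_eq, ← index_stabilizer, Subgroup.index_mul_card]

end MulAction

section AutoCommuting

variable {G : Type*} [Group G] (H K : Subgroup G) (hHK : H ≤ K) {g : G} (hg : g ∈ K)

theorem card_centAut (x : K) :
    Nat.card (centAut K x) = Nat.card (MulAction.stabilizer (MulAut K) x) := rfl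

def autPairsEquivSigma :
    autPairs H K hHK g ≃ Σ x : H, {α : MulAut K //
      α • (⟨x, hHK x.2⟩ : K) = ⟨x * g, mul_mem (hHK x.2) hg⟩} :=
  (Equiv.subtypeEquivRight fun p => by
      change _ = _ ↔ _
      rw [inv_mul_eq_iff_eq_mul, Subtype.ext_iff]
      rfl).trans
    (Equiv.subtypeProdEquivSigmaSubtype fun (x : H) (α : MulAut K) =>
      α • (⟨x, hHK x.2⟩ : K) = ⟨x * g, mul_mem (hHK x.2) hg⟩)

theorem card_autPairs [Fintype H] [Finite K] :
    Nat.card (autPairs H K hHK g) = ∑ x : H,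
      if (⟨x * g, mul_mem (hHK x.2) hg⟩ : K) ∈ orbK K ⟨x, hHK x.2⟩
        then Nat.card (centAut K ⟨x, hHK x.2⟩) else 0 := by
  rw [Nat.card_congr (autPairsEquivSigma H K hHK hg), Nat.card_sigma]
  exact Finset.sum_congr rfl fun x _ => MulAction.card_smul_eq _ _

theorem card_centAut_div_card_mulAut [Finite K] (x : K) :
    (Nat.card (centAut K x) : ℚ) / Nat.card (MulAut K) = 1 / Nat.card (orbK K x) := by
  rw [← MulAction.card_orbit_mul_card_stabilizer (MulAut K) x, card_centAut, Nat.cast_mul,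
    div_mul_cancel_right₀ (Nat.cast_ne_zero.2 Nat.card_pos.ne'), one_div]
  rfl

theorem prAut_eq_sum_card_centAut [Fintype H] [Finite K] :
    prAut H K hHK g = (1 / ((Nat.card H : ℚ) * Nat.card (MulAut K))) *
      ∑ x : H, if (⟨x * g, mul_mem (hHK x.2) hg⟩ : K) ∈ orbK K ⟨x, hHK x.2⟩
        then (Nat.card (centAut K ⟨x, hHK x.2⟩) : ℚ) else 0 := by
  rw [prAut, card_autPairs H K hHK hg, one_div_mul_eq_div]
  push_cast
  rfl

theorem prAut_eq_sum_inv_card_orbK [Fintype H] [Finite K] :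
    prAut H K hHK g = (1 / (Nat.card H : ℚ)) *
      ∑ x : H, if (⟨x * g, mul_mem (hHK x.2) hg⟩ : K) ∈ orbK K ⟨x, hHK x.2⟩
        then 1 / (Nat.card (orbK K ⟨x, hHK x.2⟩) : ℚ) else 0 := by
  rw [prAut_eq_sum_card_centAut H K hHK hg, Finset.mul_sum, Finset.mul_sum]
  refine Finset.sum_congr rfl fun x _ => ?_
  split_ifs
  · rw [← card_centAut_div_card_mulAut]
    ring
  · rw [mul_zero, mul_zero]

end AutoCommuting

/-- Computing formulae for the generalized autocommuting probability `Pr_g(H, Aut(K))`. -/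
theorem stmt_2 {G : Type*} [Group G] [Fintype G] (H K : Subgroup G) (hHK : H ≤ K)
    (g : G) (hg : g ∈ K) :
    prAut H K hHK g =
      (1 / ((Nat.card ↥H : ℚ) * (Nat.card (MulAut ↥K) : ℚ))) *
        ∑ x : ↥H,
          (if (⟨(x : G) * g, mul_mem (hHK x.2) hg⟩ : ↥K) ∈ orbK K ⟨(x : G), hHK x.2⟩
            then (Nat.card (centAut K ⟨(x : G), hHK x.2⟩) : ℚ) else 0) ∧
    prAut H K hHK g =
      (1 / (Nat.card ↥H : ℚ)) *
        ∑ x : ↥H,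
          (if (⟨(x : G) * g, mul_mem (hHK x.2) hg⟩ : ↥K) ∈ orbK K ⟨(x : G), hHK x.2⟩
            then 1 / (Nat.card (orbK K ⟨(x : G), hHK x.2⟩) : ℚ) else 0) :=
  ⟨prAut_eq_sum_card_centAut H K hHK hg, prAut_eq_sum_inv_card_orbK H K hHK hg⟩
end

section
/- Let G be a finite group and H ⊆ K subgroups of G. If C_{Aut(K)}(x) = {id} for every x ∈ H with x ≠ 1, then Pr(H,Aut(K)) = 1/|H| + 1/|Aut(K)| − 1/(|H|·|Aut(K)|). -/
open scoped Pointwise Classical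

theorem Set.ncard_singleton_prod_univ_union_univ_prod_singleton_add_one {α β : Type*}
    [Finite α] [Finite β] (a : α) (b : β) :
    ({a} ×ˢ (Set.univ : Set β) ∪ (Set.univ : Set α) ×ˢ {b}).ncard + 1
      = Nat.card α + Nat.card β := by
  have hinter : {a} ×ˢ (Set.univ : Set β) ∩ (Set.univ : Set α) ×ˢ {b} = {(a, b)} := by
    ext ⟨x, y⟩
    simp [Prod.ext_iff]
  have := Set.ncard_union_add_ncard_inter ({a} ×ˢ (Set.univ : Set β)) (Set.univ ×ˢ {b})
  simp only [hinter, Set.ncard_singleton, Set.ncard_prod, Set.ncard_univ, one_mul,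
    mul_one] at this
  omega

section AutoCommuting

variable {G : Type*} [Group G] {H K : Subgroup G} {hHK : H ≤ K}

theorem mem_autPairs_one_iff {p : ↥H × MulAut ↥K} :
    p ∈ autPairs H K hHK 1 ↔ p.2 ∈ centAut K ⟨p.1, hHK p.1.2⟩ := by
  rw [autPairs, Set.mem_ofPred_eq, inv_mul_eq_one, centAut, Set.mem_ofPred_eq, eq_comm,
    Subtype.ext_iff]

theorem autPairs_one_eq_of_centAut_eq_one
    (hcent : ∀ x : ↥H, (x : G) ≠ 1 → centAut K ⟨(x : G), hHK x.2⟩ = {1}) :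
    autPairs H K hHK 1 = {1} ×ˢ Set.univ ∪ Set.univ ×ˢ {1} := by
  ext ⟨x, α⟩
  rw [mem_autPairs_one_iff]
  simp only [Set.mem_union, Set.mem_prod, Set.mem_singleton_iff, Set.mem_univ, and_true,
    true_and]
  constructor
  · intro hα
    by_cases hx : (x : G) = 1
    · exact Or.inl (Subtype.ext hx)
    · rw [hcent x hx] at hα
      exact Or.inr hα
  · rintro (rfl | rfl)
    · exact map_one α
    · rfl

end AutoCommuting

/-- If `C_{Aut(K)}(x) = {id}` for every non-identity `x ∈ H`, then
`Pr(H,Aut(K)) = 1/|H| + 1/|Aut(K)| - 1/(|H||Aut(K)|)`. -/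
theorem stmt_4 {G : Type*} [Group G] [Fintype G] (H K : Subgroup G) (hHK : H ≤ K)
    (hcent : ∀ x : ↥H, (x : G) ≠ 1 → centAut K ⟨(x : G), hHK x.2⟩ = {1}) :
    prAut H K hHK 1 =
      1 / (Nat.card ↥H : ℚ) + 1 / (Nat.card (MulAut ↥K) : ℚ) -
        1 / ((Nat.card ↥H : ℚ) * (Nat.card (MulAut ↥K) : ℚ)) := by
  have hcard : (Nat.card (autPairs H K hHK 1) : ℚ) + 1
      = Nat.card ↥H + Nat.card (MulAut ↥K) := by
    rw [autPairs_one_eq_of_centAut_eq_one hcent, Nat.card_coe_set_eq]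
    exact_mod_cast
      Set.ncard_singleton_prod_univ_union_univ_prod_singleton_add_one (1 : ↥H) (1 : MulAut ↥K)
  have hH : (Nat.card ↥H : ℚ) ≠ 0 := by exact_mod_cast Nat.card_pos.ne'
  have hA : (Nat.card (MulAut ↥K) : ℚ) ≠ 0 := by exact_mod_cast Nat.card_pos.ne'
  rw [prAut]
  field_simp
  linarith
end

section
/- Let G be a finite group, H ⊆ K subgroups of G, and g ∈ K. Then Pr_{g⁻¹}(H,Aut(K)) = Pr_g(H,Aut(K)). -/
open scoped Pointwise Classical

/-! The map `(x, α) ↦ (x⁻¹, ι_{x⁻¹} ∘ α)` is an involution of `H × Aut(K)` sending the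
autocommutator `[x, α]` to `[x⁻¹, ι_{x⁻¹} ∘ α] = x · x⁻¹ α(x)⁻¹ x = [x, α]⁻¹`, so it is a bijection
between the pairs counted by `Pr_g` and those counted by `Pr_{g⁻¹}`. -/

theorem MulAut.inv_inv_mul_conj_inv_mul_apply_inv {K : Type*} [Group K] (x : K) (α : MulAut K) :
    x⁻¹⁻¹ * (MulAut.conj x⁻¹ * α) x⁻¹ = (x⁻¹ * α x)⁻¹ := by
  simp [mul_assoc]

section AutPairs

variable {G : Type*} [Group G] (H K : Subgroup G) (hHK : H ≤ K)

theorem mem_autPairs_iff (g : G) (p : ↥H × MulAut ↥K) :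
    p ∈ autPairs H K hHK g ↔
      (((Subgroup.inclusion hHK p.1)⁻¹ * p.2 (Subgroup.inclusion hHK p.1) : ↥K) : G) = g :=
  Iff.rfl

def autFlip (p : ↥H × MulAut ↥K) : ↥H × MulAut ↥K :=
  (p.1⁻¹, MulAut.conj (Subgroup.inclusion hHK p.1)⁻¹ * p.2)

theorem autFlip_involutive : Function.Involutive (autFlip H K hHK) := by
  rintro ⟨x, α⟩
  simp [autFlip, ← mul_assoc]

theorem mem_autPairs_autFlip_iff (g : G) (p : ↥H × MulAut ↥K) :
    autFlip H K hHK p ∈ autPairs H K hHK g⁻¹ ↔ p ∈ autPairs H K hHK g := by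
  rw [mem_autPairs_iff, mem_autPairs_iff, autFlip, map_inv,
    MulAut.inv_inv_mul_conj_inv_mul_apply_inv, Subgroup.coe_inv, inv_inj]

def autPairsInvEquiv (g : G) : autPairs H K hHK g ≃ autPairs H K hHK g⁻¹ :=
  (autFlip_involutive H K hHK).toPerm.subtypeEquiv fun p =>
    (mem_autPairs_autFlip_iff H K hHK g p).symm

end AutPairs

theorem stmt_5_general {G : Type*} [Group G] (H K : Subgroup G) (hHK : H ≤ K)
    (g : G) :
    prAut H K hHK g⁻¹ = prAut H K hHK g := by
  rw [prAut, prAut, Nat.card_congr (autPairsInvEquiv H K hHK g)]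

/-- `Pr_{g⁻¹}(H, Aut(K)) = Pr_g(H, Aut(K))`. -/
theorem stmt_5 {G : Type*} [Group G] [Fintype G] (H K : Subgroup G) (hHK : H ≤ K)
    (g : G) (hg : g ∈ K) :
    prAut H K hHK g⁻¹ = prAut H K hHK g :=
  stmt_5_general H K hHK g
end

section
/- Let G₁ and G₂ be finite groups, H₁ ⊆ K₁ subgroups of G₁ and H₂ ⊆ K₂ subgroups of G₂ with gcd(|K₁|,|K₂|) = 1. Then for every (g₁,g₂) ∈ K₁ × K₂, Pr_{(g₁,g₂)}(H₁ × H₂, Aut(K₁ × K₂)) = Pr_{g₁}(H₁,Aut(K₁)) · Pr_{g₂}(H₂,Aut(K₂)), where H₁ × H₂ and K₁ × K₂ are the product subgroups of G₁ × G₂. -/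
/-! An automorphism `α` of `A × B` with `|A|` and `|B|` coprime preserves both factors, because
the composite `A → A × B → B` of inclusion, `α` and projection is a homomorphism between groups of
coprime orders and hence trivial. So `Aut(A × B) = Aut(A) × Aut(B)` acting componentwise, and the
autocommutator `[(x₁, x₂), (α₁, α₂)] = ([x₁, α₁], [x₂, α₂])` splits as well: the pairs counted by
`Pr_{(g₁,g₂)}` are exactly products of pairs counted by `Pr_{g₁}` and `Pr_{g₂}`. -/


open scoped Pointwise Classical

section CoprimeProduct

variable {A B : Type*} [Group A] [Group B]

theorem MonoidHom.eq_one_of_coprime_card (f : A →* B)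
    (h : (Nat.card A).Coprime (Nat.card B)) : f = 1 := by
  rw [← f.range_eq_bot_iff, ← Subgroup.card_eq_one]
  exact Nat.eq_one_of_dvd_coprimes h (Subgroup.card_range_dvd f) f.range.card_subgroup_dvd_card

namespace MulAut

theorem snd_apply_inl_of_coprime (h : (Nat.card A).Coprime (Nat.card B)) (α : MulAut (A × B))
    (a : A) : (α (a, 1)).2 = 1 :=
  DFunLike.congr_fun (((MonoidHom.snd A B).comp
    ((α : A × B →* A × B).comp (MonoidHom.inl A B))).eq_one_of_coprime_card h) a

theorem apply_inl_of_coprime (h : (Nat.card A).Coprime (Nat.card B)) (α : MulAut (A × B))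
    (a : A) : α (a, 1) = ((α (a, 1)).1, 1) :=
  Prod.ext rfl (snd_apply_inl_of_coprime h α a)

def fstOfCoprime (h : (Nat.card A).Coprime (Nat.card B)) (α : MulAut (A × B)) : MulAut A where
  toFun a := (α (a, 1)).1
  invFun a := (α⁻¹ (a, 1)).1
  left_inv a := by simp only [← apply_inl_of_coprime h, inv_apply_self]
  right_inv a := by simp only [← apply_inl_of_coprime h α⁻¹, apply_inv_self]
  map_mul' a b := by
    simp only [← Prod.fst_mul, ← map_mul, Prod.mk_mul_mk, mul_one]

def sndOfCoprime (h : (Nat.card A).Coprime (Nat.card B)) (α : MulAut (A × B)) : MulAut B :=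
  fstOfCoprime h.symm (congr (MulEquiv.prodComm) α)

theorem fstOfCoprime_apply (h : (Nat.card A).Coprime (Nat.card B)) (α : MulAut (A × B)) (a : A) :
    fstOfCoprime h α a = (α (a, 1)).1 :=
  rfl

theorem sndOfCoprime_apply (h : (Nat.card A).Coprime (Nat.card B)) (α : MulAut (A × B)) (b : B) :
    sndOfCoprime h α b = (α (1, b)).2 :=
  rfl

theorem apply_eq_of_coprime (h : (Nat.card A).Coprime (Nat.card B)) (α : MulAut (A × B))
    (x : A × B) : α x = (fstOfCoprime h α x.1, sndOfCoprime h α x.2) := by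
  have hfst : (α (1, x.2)).1 = 1 := by
    simpa using snd_apply_inl_of_coprime h.symm (congr MulEquiv.prodComm α) x.2
  calc α x = α (x.1, 1) * α (1, x.2) := by rw [← map_mul, Prod.mk_mul_mk, mul_one, one_mul]
    _ = _ := by
      rw [fstOfCoprime_apply, sndOfCoprime_apply, apply_inl_of_coprime h, Prod.ext_iff]
      simp [hfst]

def prodEquivOfCoprime (h : (Nat.card A).Coprime (Nat.card B)) :
    MulAut (A × B) ≃ MulAut A × MulAut B where
  toFun α := (fstOfCoprime h α, sndOfCoprime h α)
  invFun p := MulEquiv.prodCongr p.1 p.2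
  left_inv α := MulEquiv.ext fun x => (apply_eq_of_coprime h α x).symm
  right_inv _ := by ext <;> rfl

end MulAut

end CoprimeProduct

namespace Subgroup

variable {G₁ G₂ : Type*} [Group G₁] [Group G₂]

def mulAutProdEquivOfCoprime (K₁ : Subgroup G₁) (K₂ : Subgroup G₂)
    (h : (Nat.card K₁).Coprime (Nat.card K₂)) :
    MulAut (K₁.prod K₂) ≃ MulAut K₁ × MulAut K₂ :=
  (MulAut.congr (K₁.prodEquiv K₂)).toEquiv.trans (MulAut.prodEquivOfCoprime h)

theorem coe_mulAut_prod_apply_of_coprime {K₁ : Subgroup G₁} {K₂ : Subgroup G₂}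
    (h : (Nat.card K₁).Coprime (Nat.card K₂)) (α : MulAut (K₁.prod K₂)) (x : G₁ × G₂)
    (hx : x ∈ K₁.prod K₂) :
    (α ⟨x, hx⟩ : G₁ × G₂) = (((mulAutProdEquivOfCoprime K₁ K₂ h α).1 ⟨x.1, hx.1⟩ : G₁),
      ((mulAutProdEquivOfCoprime K₁ K₂ h α).2 ⟨x.2, hx.2⟩ : G₂)) := by
  have := MulAut.apply_eq_of_coprime h (MulAut.congr (K₁.prodEquiv K₂) α)
    (K₁.prodEquiv K₂ ⟨x, hx⟩)
  simp only [MulAut.congr_apply, MulEquiv.trans_apply, MulEquiv.symm_apply_apply] at this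
  exact congrArg (fun p : K₁ × K₂ => ((p.1 : G₁), (p.2 : G₂))) this

end Subgroup

section AutPairsProd

variable {G₁ G₂ : Type*} [Group G₁] [Group G₂] {H₁ K₁ : Subgroup G₁} {H₂ K₂ : Subgroup G₂}

def autPairsProdEquivOfCoprime (hHK₁ : H₁ ≤ K₁) (hHK₂ : H₂ ≤ K₂)
    (h : (Nat.card K₁).Coprime (Nat.card K₂)) (g₁ : G₁) (g₂ : G₂) :
    autPairs (H₁.prod H₂) (K₁.prod K₂) (Subgroup.prod_mono hHK₁ hHK₂) (g₁, g₂) ≃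
      autPairs H₁ K₁ hHK₁ g₁ × autPairs H₂ K₂ hHK₂ g₂ :=
  let E := ((H₁.prodEquiv H₂).toEquiv.prodCongr (K₁.mulAutProdEquivOfCoprime K₂ h)).trans
    (Equiv.prodProdProdComm _ _ _ _)
  (Equiv.subtypeEquiv E fun ⟨x, α⟩ => by
    simp only [autPairs, Subgroup.coe_mulAut_prod_apply_of_coprime h, Prod.ext_iff]
    rfl).trans Equiv.subtypeProdEquivProd

end AutPairsProd

theorem stmt_6_general {G₁ G₂ : Type*} [Group G₁] [Group G₂]
    (H₁ K₁ : Subgroup G₁) (H₂ K₂ : Subgroup G₂)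
    (hHK₁ : H₁ ≤ K₁) (hHK₂ : H₂ ≤ K₂)
    (hcop : Nat.Coprime (Nat.card ↥K₁) (Nat.card ↥K₂))
    (g₁ : G₁) (g₂ : G₂) :
    prAut (H₁.prod H₂) (K₁.prod K₂) (Subgroup.prod_mono hHK₁ hHK₂) (g₁, g₂) =
      prAut H₁ K₁ hHK₁ g₁ * prAut H₂ K₂ hHK₂ g₂ := by
  have hpairs := Nat.card_congr (autPairsProdEquivOfCoprime hHK₁ hHK₂ hcop g₁ g₂)
  have hH := Nat.card_congr (H₁.prodEquiv H₂).toEquiv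
  have hAut := Nat.card_congr (K₁.mulAutProdEquivOfCoprime K₂ hcop)
  rw [Nat.card_prod] at hpairs hH hAut
  simp only [prAut, hpairs, hH, hAut, Nat.cast_mul]
  ring

/-- Multiplicativity of the generalized autocommuting probability for coprime direct factors. -/
theorem stmt_6 {G₁ G₂ : Type*} [Group G₁] [Group G₂] [Fintype G₁] [Fintype G₂]
    (H₁ K₁ : Subgroup G₁) (H₂ K₂ : Subgroup G₂)
    (hHK₁ : H₁ ≤ K₁) (hHK₂ : H₂ ≤ K₂)
    (hcop : Nat.Coprime (Nat.card ↥K₁) (Nat.card ↥K₂))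
    (g₁ : G₁) (g₂ : G₂) (hg₁ : g₁ ∈ K₁) (hg₂ : g₂ ∈ K₂) :
    prAut (H₁.prod H₂) (K₁.prod K₂) (Subgroup.prod_mono hHK₁ hHK₂) (g₁, g₂) =
      prAut H₁ K₁ hHK₁ g₁ * prAut H₂ K₂ hHK₂ g₂ :=
  stmt_6_general H₁ K₁ H₂ K₂ hHK₁ hHK₂ hcop g₁ g₂
end

section
/- Let G be a finite group, H ⊆ K subgroups of G, and g ∈ K with g ≠ 1 and g ∈ S(H,Aut(K)). Then Pr_g(H,Aut(K)) ≥ |L(H,Aut(K))|·|C_{Aut(K)}(H)|/(|H|·|Aut(K)|). -/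
open scoped Pointwise Classical

/-! Since `g ∈ S(H, Aut(K))` there is a pair `(x₀, α₀)` with `[x₀, α₀] = g`, and the injective
translation `(a, β) ↦ (a x₀, α₀ β)` maps `L(H, Aut(K)) × C_{Aut(K)}(H)` into the pairs with
autocommutator `g`. -/

section AutoCommutingPairs

variable {G : Type*} [Group G] {H K : Subgroup G} {hHK : H ≤ K} {g : G}

/-- `β` fixes `a * x ∈ H` and `α` fixes `a`, so `[a * x, α * β] = x⁻¹ a⁻¹ a α(x) = [x, α]`. -/
theorem mul_mem_autPairs {x : ↥H} {α : MulAut ↥K} (hxα : (x, α) ∈ autPairs H K hHK g)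
    {a : ↥H} (ha : a ∈ absCent H K hHK) {β : MulAut ↥K} (hβ : β ∈ centAutH H K hHK) :
    (a * x, α * β) ∈ autPairs H K hHK g := by
  have hmul : (⟨((a * x : ↥H) : G), hHK (a * x).2⟩ : ↥K)
      = ⟨(a : G), hHK a.2⟩ * ⟨(x : G), hHK x.2⟩ := rfl
  simp only [autPairs, Set.mem_ofPred_eq, MulAut.mul_apply] at hxα ⊢
  rw [hmul, map_mul, hβ a, hβ x, map_mul, ha α, Subgroup.coe_mul, Subgroup.coe_mul, mul_inv_rev,
    mul_assoc]
  exact (congrArg _ (inv_mul_cancel_left (a : G) _)).trans hxα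

theorem autPairs_nonempty_of_mem_autCommSet (hg : g ∈ K)
    (hgS : (⟨g, hg⟩ : ↥K) ∈ autCommSet H K hHK) : (autPairs H K hHK g).Nonempty := by
  obtain ⟨x, α, hxα⟩ := hgS
  exact ⟨(x, α), congrArg Subtype.val hxα⟩

theorem card_absCent_mul_card_centAutH_le_card_autPairs [Finite ↥H] [Finite (MulAut ↥K)]
    (hne : (autPairs H K hHK g).Nonempty) :
    Nat.card (absCent H K hHK) * Nat.card (centAutH H K hHK) ≤ Nat.card (autPairs H K hHK g) := by
  obtain ⟨⟨x, α⟩, hxα⟩ := hne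
  let translate : absCent H K hHK × centAutH H K hHK → autPairs H K hHK g :=
    fun p => ⟨(p.1 * x, α * p.2), mul_mem_autPairs hxα p.1.2 p.2.2⟩
  have htranslate : Function.Injective translate := by
    rintro ⟨a, β⟩ ⟨a', β'⟩ h
    obtain ⟨ha, hβ⟩ := Prod.ext_iff.mp (congrArg Subtype.val h)
    exact Prod.ext (Subtype.ext (mul_right_cancel ha)) (Subtype.ext (mul_left_cancel hβ))
  rw [← Nat.card_prod]
  exact Nat.card_le_card_of_injective translate htranslate

end AutoCommutingPairs

theorem stmt_8_general {G : Type*} [Group G] [Fintype G] (H K : Subgroup G) (hHK : H ≤ K)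
    (g : G) (hg : g ∈ K)
    (hgS : (⟨g, hg⟩ : ↥K) ∈ autCommSet H K hHK) :
    prAut H K hHK g ≥
      (Nat.card (absCent H K hHK) : ℚ) * (Nat.card (centAutH H K hHK) : ℚ) /
        ((Nat.card ↥H : ℚ) * (Nat.card (MulAut ↥K) : ℚ)) := by
  rw [ge_iff_le, prAut]
  gcongr
  exact_mod_cast card_absCent_mul_card_centAutH_le_card_autPairs
    (autPairs_nonempty_of_mem_autCommSet hg hgS)

/-- Lower bound for `Pr_g(H, Aut(K))` when `g ≠ 1` and `g ∈ S(H,Aut(K))`. -/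
theorem stmt_8 {G : Type*} [Group G] [Fintype G] (H K : Subgroup G) (hHK : H ≤ K)
    (g : G) (hg : g ∈ K) (hg1 : g ≠ 1)
    (hgS : (⟨g, hg⟩ : ↥K) ∈ autCommSet H K hHK) :
    prAut H K hHK g ≥
      (Nat.card (absCent H K hHK) : ℚ) * (Nat.card (centAutH H K hHK) : ℚ) /
        ((Nat.card ↥H : ℚ) * (Nat.card (MulAut ↥K) : ℚ)) :=
  stmt_8_general H K hHK g hg hgS
end

section
/- Let G be a finite group, H ⊆ K subgroups of G with H ≠ L(H,Aut(K)), let p be the smallest prime dividing |Aut(K)|, and let g ∈ K with g ≠ 1 and g ∈ S(H,Aut(K)). Then Pr_g(H,Aut(K)) ≤ (|H| − |L(H,Aut(K))|)/(p·|H|) < 1/p. -/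
open scoped Pointwise Classical

/-! For fixed `x ∈ H`, the automorphisms `α` with `x⁻¹ α(x) = g` are those sending `x` to `x g`:
either none or a coset of the stabiliser of `x`. For `x ∈ L(H, Aut(K))` there are none since
`g ≠ 1`. Otherwise the stabiliser is proper, so its index is a divisor `> 1` of `|Aut(K)|`, hence
at least `p`, and there are at most `|Aut(K)| / p` such `α`. Summing over `x ∈ H \ L(H, Aut(K))`
gives the bound; the strict inequality is `|L(H, Aut(K))| ≥ 1`. -/

namespace MulAction

variable {A X Y : Type*} [Group A] [MulAction A X] [Finite A]

theorem card_fiber_le_card_stabilizer {f : X → Y} (hf : Function.Injective f) (x : X) (y : Y) :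
    Nat.card {a : A // f (a • x) = y} ≤ Nat.card (stabilizer A x) := by
  rcases isEmpty_or_nonempty {a : A // f (a • x) = y} with _ | ⟨⟨a₀, ha₀⟩⟩
  · simp
  · refine Nat.card_le_card_of_injective (fun a => ⟨a₀⁻¹ * a.1, ?_⟩) fun a b hab => ?_
    · rw [mem_stabilizer_iff, mul_smul, hf (a.2.trans ha₀.symm), inv_smul_smul]
    · exact Subtype.ext (mul_left_cancel (congrArg Subtype.val hab))

theorem le_index_stabilizer {p : ℕ} (hp : ∀ r : ℕ, r.Prime → r ∣ Nat.card A → p ≤ r)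
    {x : X} (hx : x ∉ fixedPoints A X) : p ≤ (stabilizer A x).index := by
  have hne : stabilizer A x ≠ ⊤ := fun htop => hx fun a => (htop ▸ Subgroup.mem_top a :)
  have hindex : (stabilizer A x).index ≠ 1 := (Subgroup.one_lt_index_of_ne_top hne).ne'
  exact (hp _ (Nat.minFac_prime hindex)
    ((Nat.minFac_dvd _).trans (Subgroup.index_dvd_card _))).trans
    (Nat.minFac_le (Nat.pos_of_ne_zero Subgroup.index_ne_zero_of_finite))

theorem mul_card_fiber_le_card {p : ℕ} (hp : ∀ r : ℕ, r.Prime → r ∣ Nat.card A → p ≤ r)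
    {f : X → Y} (hf : Function.Injective f) {x : X} (hx : x ∉ fixedPoints A X) (y : Y) :
    p * Nat.card {a : A // f (a • x) = y} ≤ Nat.card A :=
  calc p * Nat.card {a : A // f (a • x) = y}
      ≤ (stabilizer A x).index * Nat.card (stabilizer A x) :=
        Nat.mul_le_mul (le_index_stabilizer hp hx) (card_fiber_le_card_stabilizer hf x y)
    _ = Nat.card A := (stabilizer A x).index_mul_card

end MulAction

theorem Fintype.sum_ite_mem_zero_const {α R : Type*} [Fintype α] [CommRing R] (s : Set α)
    [DecidablePred (· ∈ s)] (c : R) :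
    ∑ x : α, (if x ∈ s then 0 else c) = (Nat.card α - Nat.card s) * c := by
  rw [Finset.sum_ite, Finset.sum_const_zero, zero_add, Finset.sum_const, nsmul_eq_mul,
    Nat.card_eq_fintype_card, Nat.card_eq_fintype_card, Fintype.card_subtype, ← Finset.card_univ,
    ← Finset.card_filter_add_card_filter_not (s := Finset.univ) (· ∈ s)]
  push_cast
  ring

section AutoCommuting

variable {G : Type*} [Group G] {H K : Subgroup G} (hHK : H ≤ K)

theorem card_autPairs_eq_sum [Fintype H] [Finite K] (g : G) :
    Nat.card (autPairs H K hHK g) =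
      ∑ x : H, Nat.card {α : MulAut K // (x : G)⁻¹ * (α ⟨(x : G), hHK x.2⟩ : K) = g} :=
  (Nat.card_congr (Equiv.subtypeProdEquivSigmaSubtype fun (x : H) (α : MulAut K) =>
    (x : G)⁻¹ * (α ⟨(x : G), hHK x.2⟩ : K) = g)).trans Nat.card_sigma

theorem card_fiber_eq_zero_of_mem_absCent {g : G} (hg : g ≠ 1) {x : H} (hx : x ∈ absCent H K hHK) :
    Nat.card {α : MulAut K // (x : G)⁻¹ * (α ⟨(x : G), hHK x.2⟩ : K) = g} = 0 := by
  have : IsEmpty {α : MulAut K // (x : G)⁻¹ * (α ⟨(x : G), hHK x.2⟩ : K) = g} :=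
    ⟨fun ⟨α, hα⟩ => hg (by rw [← hα, hx α]; exact inv_mul_cancel _)⟩
  exact Nat.card_of_isEmpty

theorem mul_card_autPairs_le [Finite G] {p : ℕ}
    (hp : ∀ r : ℕ, r.Prime → r ∣ Nat.card (MulAut K) → p ≤ r) {g : G} (hg : g ≠ 1) :
    (p : ℚ) * Nat.card (autPairs H K hHK g) ≤
      (Nat.card H - Nat.card (absCent H K hHK)) * Nat.card (MulAut K) := by
  classical
  have := Fintype.ofFinite H
  rw [card_autPairs_eq_sum, Nat.cast_sum, Finset.mul_sum]
  refine (Finset.sum_le_sum fun x _ => ?_).trans_eq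
    (Fintype.sum_ite_mem_zero_const (absCent H K hHK : Set H) _)
  split_ifs with hx
  · rw [card_fiber_eq_zero_of_mem_absCent hHK hg hx, Nat.cast_zero, mul_zero]
  · have hinj : Function.Injective fun k : K => (x : G)⁻¹ * k :=
      fun k l hkl => Subtype.ext (mul_left_cancel hkl)
    exact_mod_cast MulAction.mul_card_fiber_le_card hp hinj hx g

end AutoCommuting

theorem stmt_10_general {G : Type*} [Group G] [Fintype G] (H K : Subgroup G) (hHK : H ≤ K)
    (p : ℕ) (hp : p.Prime)
    (hpmin : ∀ r : ℕ, r.Prime → r ∣ Nat.card (MulAut ↥K) → p ≤ r)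
    (g : G) (hg1 : g ≠ 1) :
    prAut H K hHK g ≤
        ((Nat.card ↥H : ℚ) - (Nat.card (absCent H K hHK) : ℚ)) /
          ((p : ℚ) * (Nat.card ↥H : ℚ)) ∧
      ((Nat.card ↥H : ℚ) - (Nat.card (absCent H K hHK) : ℚ)) /
          ((p : ℚ) * (Nat.card ↥H : ℚ)) < 1 / (p : ℚ) := by
  have hH : (0 : ℚ) < Nat.card H := mod_cast Nat.card_pos
  have hA : (0 : ℚ) < Nat.card (MulAut K) := mod_cast Nat.card_pos
  have hL : (1 : ℚ) ≤ Nat.card (absCent H K hHK) := mod_cast Nat.card_pos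
  have hp0 : (0 : ℚ) < p := mod_cast hp.pos
  constructor
  · rw [prAut, div_le_div_iff₀ (by positivity) (by positivity)]
    calc (Nat.card (autPairs H K hHK g) : ℚ) * (p * Nat.card H)
        = p * Nat.card (autPairs H K hHK g) * Nat.card H := by ring
      _ ≤ (Nat.card H - Nat.card (absCent H K hHK)) * Nat.card (MulAut K) * Nat.card H :=
        mul_le_mul_of_nonneg_right (mul_card_autPairs_le hHK hpmin hg1) hH.le
      _ = (Nat.card H - Nat.card (absCent H K hHK)) * (Nat.card H * Nat.card (MulAut K)) := by
        ring
  · rw [div_lt_div_iff₀ (by positivity) hp0]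
    nlinarith

/-- Upper bound for `Pr_g(H,Aut(K))` for `g ≠ 1` in terms of the smallest prime `p`
dividing `|Aut(K)|`. -/
theorem stmt_10 {G : Type*} [Group G] [Fintype G] (H K : Subgroup G) (hHK : H ≤ K)
    (hne : absCent H K hHK ≠ ⊤)
    (p : ℕ) (hp : p.Prime) (hpdvd : p ∣ Nat.card (MulAut ↥K))
    (hpmin : ∀ r : ℕ, r.Prime → r ∣ Nat.card (MulAut ↥K) → p ≤ r)
    (g : G) (hg : g ∈ K) (hg1 : g ≠ 1)
    (hgS : (⟨g, hg⟩ : ↥K) ∈ autCommSet H K hHK) :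
    prAut H K hHK g ≤
        ((Nat.card ↥H : ℚ) - (Nat.card (absCent H K hHK) : ℚ)) /
          ((p : ℚ) * (Nat.card ↥H : ℚ)) ∧
      ((Nat.card ↥H : ℚ) - (Nat.card (absCent H K hHK) : ℚ)) /
          ((p : ℚ) * (Nat.card ↥H : ℚ)) < 1 / (p : ℚ) :=
  stmt_10_general H K hHK p hp hpmin g hg1
end

section
/- Let G be a finite group, H ⊆ K subgroups of G, and g ∈ K. Then Pr_g(H,Aut(K)) ≤ [K : H] · Pr(K,Aut(K)), with equality if and only if g = 1 and H = K. -/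
open scoped Pointwise Classical

/-!
For fixed `x ∈ H`, the automorphisms `α` with `x⁻¹ α(x) = g` are either none or a left coset of the
stabiliser of `x` in `Aut(K)`. Hence `(x, α) ↦ (x, α₀⁻¹ α)`, for a fixed solution `α₀`, embeds the pairs
counted by `Pr_g(H, Aut(K))` into those counted by `Pr(K, Aut(K))`, and the factor `[K : H]` is
`|K| / |H|`. The embedding is onto exactly when `H = K` and every `x ∈ H` has a solution; for `x = 1`
that forces `g = 1`.
-/

section PairsToFixedPairs

variable {A X Y : Type*} [Group A] [MulAction A X] (e : Y → X) (R : Y → X → Prop)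

/-- As `R y` pins down the point, `a • e y = a₀ • e y` for the chosen solution `a₀`, so `a₀⁻¹ * a`
fixes `e y`. -/
noncomputable def toFixedPairs (hR : ∀ y, {x | R y x}.Subsingleton)
    (p : {p : Y × A // R p.1 (p.2 • e p.1)}) : {q : X × A // q.2 • q.1 = q.1} :=
  ⟨(e p.1.1, (Classical.epsilon fun a : A => R p.1.1 (a • e p.1.1))⁻¹ * p.1.2), by
    rw [mul_smul, inv_smul_eq_iff]
    exact hR p.1.1 p.2 (Classical.epsilon_spec (p := fun a : A => R p.1.1 (a • e p.1.1)) ⟨_, p.2⟩)⟩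

variable {e R}

theorem toFixedPairs_injective (he : Function.Injective e) (hR : ∀ y, {x | R y x}.Subsingleton) :
    Function.Injective (toFixedPairs (A := A) e R hR) := by
  rintro ⟨⟨y, a⟩, hya⟩ ⟨⟨y', a'⟩, hya'⟩ h
  obtain ⟨hy, ha⟩ := Prod.ext_iff.mp (Subtype.ext_iff.mp h)
  obtain rfl : y = y' := he hy
  exact Subtype.ext (Prod.ext rfl (mul_left_cancel ha))

theorem toFixedPairs_surjective_iff (he : Function.Injective e)
    (hR : ∀ y, {x | R y x}.Subsingleton) :
    Function.Surjective (toFixedPairs (A := A) e R hR) ↔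
      Function.Surjective e ∧ ∀ y, ∃ a : A, R y (a • e y) := by
  constructor
  · intro hsurj
    refine ⟨fun x => ?_, fun y => ?_⟩
    · obtain ⟨⟨⟨y, _⟩, _⟩, hp⟩ := hsurj ⟨(x, 1), one_smul A x⟩
      exact ⟨y, congrArg (·.1.1) hp⟩
    · obtain ⟨⟨⟨y', a⟩, hR'⟩, hp⟩ := hsurj ⟨(e y, 1), one_smul A (e y)⟩
      obtain rfl : y' = y := he (congrArg (·.1.1) hp)
      exact ⟨a, hR'⟩
  · rintro ⟨he', hne⟩ ⟨⟨x, b⟩, hb⟩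
    obtain ⟨y, rfl⟩ := he' x
    set a₀ := Classical.epsilon fun a : A => R y (a • e y)
    refine ⟨⟨(y, a₀ * b), ?_⟩, Subtype.ext (Prod.ext rfl (inv_mul_cancel_left a₀ b))⟩
    change R y ((a₀ * b) • e y)
    rw [mul_smul, hb]
    exact Classical.epsilon_spec (hne y)

variable [Finite A] [Finite X]

theorem card_pairs_le_card_fixedPairs (he : Function.Injective e)
    (hR : ∀ y, {x | R y x}.Subsingleton) :
    Nat.card {p : Y × A // R p.1 (p.2 • e p.1)} ≤ Nat.card {q : X × A // q.2 • q.1 = q.1} :=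
  Nat.card_le_card_of_injective _ (toFixedPairs_injective he hR)

theorem card_pairs_eq_card_fixedPairs_iff (he : Function.Injective e)
    (hR : ∀ y, {x | R y x}.Subsingleton) :
    Nat.card {p : Y × A // R p.1 (p.2 • e p.1)} = Nat.card {q : X × A // q.2 • q.1 = q.1} ↔
      Function.Surjective e ∧ ∀ y, ∃ a : A, R y (a • e y) := by
  have hinj := toFixedPairs_injective (A := A) he hR
  rw [← toFixedPairs_surjective_iff he hR]
  exact ⟨fun h => ((Nat.bijective_iff_injective_and_card _).2 ⟨hinj, h⟩).2,
    fun h => Nat.card_eq_of_bijective _ ⟨hinj, h⟩⟩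

end PairsToFixedPairs

section AutPairs

variable {G : Type*} [Group G]

theorem card_autPairs_self_one (K : Subgroup G) :
    Nat.card (autPairs K K le_rfl 1) = Nat.card {q : ↥K × MulAut ↥K // q.2 • q.1 = q.1} :=
  Nat.card_congr <| Equiv.subtypeEquivRight fun q => by
    rw [autPairs, Set.mem_ofPred_eq, inv_mul_eq_one, eq_comm, Subtype.ext_iff]; rfl

theorem Subgroup.inclusion_surjective_iff {H K : Subgroup G} (hHK : H ≤ K) :
    Function.Surjective (Subgroup.inclusion hHK) ↔ H = K :=
  ⟨fun h => SetLike.coe_injective (Set.eq_of_inclusion_surjective (h := hHK) h), by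
    rintro rfl; exact fun x => ⟨x, rfl⟩⟩

theorem setOf_inv_mul_eq_subsingleton (K : Subgroup G) (x g : G) :
    {k : ↥K | x⁻¹ * (k : G) = g}.Subsingleton := fun _ h₁ _ h₂ =>
  Subtype.ext (mul_left_cancel (h₁.trans h₂.symm))

theorem Subgroup.card_mul_relIndex {H K : Subgroup G} (hHK : H ≤ K) :
    Nat.card H * H.relIndex K = Nat.card K :=
  Nat.card_congr (Subgroup.subgroupOfEquivOfLe hHK).toEquiv ▸ (H.subgroupOf K).card_mul_index

variable [Finite G] (H K : Subgroup G) (hHK : H ≤ K) (g : G)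

theorem card_autPairs_le : Nat.card (autPairs H K hHK g) ≤ Nat.card (autPairs K K le_rfl 1) :=
  card_autPairs_self_one K ▸ card_pairs_le_card_fixedPairs (Subgroup.inclusion_injective hHK)
    fun x => setOf_inv_mul_eq_subsingleton K (x : G) g

theorem card_autPairs_eq_iff :
    Nat.card (autPairs H K hHK g) = Nat.card (autPairs K K le_rfl 1) ↔ g = 1 ∧ H = K := by
  rw [card_autPairs_self_one]
  refine (card_pairs_eq_card_fixedPairs_iff (R := fun (x : H) (k : K) => (x : G)⁻¹ * (k : G) = g)
    (Subgroup.inclusion_injective hHK) fun x => setOf_inv_mul_eq_subsingleton K (x : G) g).trans ?_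
  rw [Subgroup.inclusion_surjective_iff, and_comm]
  refine and_congr_left fun _ => ⟨fun h => ?_, ?_⟩
  · obtain ⟨α, hα⟩ := h 1
    simpa using hα.symm
  · rintro rfl x
    exact ⟨1, inv_mul_cancel (x : G)⟩

theorem relIndex_mul_prAut_self {H K : Subgroup G} (hHK : H ≤ K) (g : G) :
    (H.relIndex K : ℚ) * prAut K K le_rfl g =
      Nat.card (autPairs K K le_rfl g) / (Nat.card H * Nat.card (MulAut K)) := by
  have hrel : H.relIndex K ≠ 0 :=
    (Nat.mul_ne_zero_iff.mp (Subgroup.card_mul_relIndex hHK ▸ Nat.card_pos.ne')).2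
  rw [prAut, ← Subgroup.card_mul_relIndex hHK]
  push_cast
  field_simp

end AutPairs

theorem stmt_12_general {G : Type*} [Group G] [Fintype G] (H K : Subgroup G) (hHK : H ≤ K)
    (g : G) :
    prAut H K hHK g ≤ (H.relIndex K : ℚ) * prAut K K le_rfl 1 ∧
      (prAut H K hHK g = (H.relIndex K : ℚ) * prAut K K le_rfl 1 ↔ g = 1 ∧ H = K) := by
  have hden : (0 : ℚ) < Nat.card H * Nat.card (MulAut K) := by
    exact_mod_cast Nat.mul_pos Nat.card_pos Nat.card_pos
  rw [relIndex_mul_prAut_self hHK, prAut, div_le_div_iff_of_pos_right hden,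
    div_left_inj' hden.ne', Nat.cast_le, Nat.cast_inj]
  exact ⟨card_autPairs_le H K hHK g, card_autPairs_eq_iff H K hHK g⟩

/-- `Pr_g(H,Aut(K)) ≤ [K:H] Pr(K,Aut(K))`, with equality iff `g = 1` and `H = K`. -/
theorem stmt_12 {G : Type*} [Group G] [Fintype G] (H K : Subgroup G) (hHK : H ≤ K)
    (g : G) (hg : g ∈ K) :
    prAut H K hHK g ≤ (H.relIndex K : ℚ) * prAut K K le_rfl 1 ∧
      (prAut H K hHK g = (H.relIndex K : ℚ) * prAut K K le_rfl 1 ↔ g = 1 ∧ H = K) :=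
  stmt_12_general H K hHK g
end

section
/- Let G be a finite group and H ⊆ K subgroups of G. Then Pr(H,Aut(K)) ≤ Pr(H,K), where Pr(H,K) := |{(x,y) ∈ H × K : xy = yx}| / (|H|·|K|) is the relative commuting probability. -/
open scoped Pointwise Classical

/-!
Every inner automorphism is an automorphism, so the conjugacy class of `x ∈ K` lies inside its
`Aut(K)`-orbit. By orbit–stabilizer, `|C_{Aut(K)}(x)| / |Aut(K)| = 1 / |orb_{Aut(K)}(x)|` is at most
`1 / |x^K| = |C_K(x)| / |K|`. Summing over `x ∈ H` compares the two probabilities term by term.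
-/

open MulAction

theorem MulAction.card_stabilizer_div_card_eq {M β : Type*} [Group M] [Finite M] [MulAction M β]
    (b : β) : (Nat.card (stabilizer M b) : ℚ) / Nat.card M = 1 / (orbit M b).ncard := by
  have hstab : (Nat.card (stabilizer M b) : ℚ) ≠ 0 := by exact_mod_cast Nat.card_pos.ne'
  rw [← (stabilizer M b).card_mul_index, index_stabilizer, Nat.cast_mul, div_mul_cancel_left₀ hstab,
    one_div]

theorem MulAction.card_stabilizer_div_card_le_of_orbit_subset {M N β : Type*} [Group M] [Group N]
    [Finite M] [Finite N] [MulAction M β] [MulAction N β] {b : β}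
    (horbit : orbit N b ⊆ orbit M b) :
    (Nat.card (stabilizer M b) : ℚ) / Nat.card M ≤ (Nat.card (stabilizer N b) : ℚ) / Nat.card N := by
  rw [card_stabilizer_div_card_eq, card_stabilizer_div_card_eq]
  have hpos : 0 < (orbit N b).ncard :=
    (Set.ncard_pos (Finite.finite_mulAction_orbit b)).mpr (nonempty_orbit b)
  have hle : (orbit N b).ncard ≤ (orbit M b).ncard :=
    Set.ncard_le_ncard horbit (Finite.finite_mulAction_orbit b)
  exact one_div_le_one_div_of_le (by exact_mod_cast hpos) (by exact_mod_cast hle)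

theorem orbit_conjAct_subset_orbit_mulAut {K : Type*} [Group K] (x : K) :
    orbit (ConjAct K) x ⊆ orbit (MulAut K) x := by
  rintro _ ⟨c, rfl⟩
  exact ⟨MulAut.conj (ConjAct.ofConjAct c), by simp [ConjAct.smul_def, MulAut.smul_def]⟩

section Counting

variable {G : Type*} [Group G] [Fintype G] (H K : Subgroup G) (hHK : H ≤ K)

theorem card_autPairs_one :
    Nat.card (autPairs H K hHK 1) =
      ∑ x : H, Nat.card (stabilizer (MulAut K) (Subgroup.inclusion hHK x)) := by
  rw [← Nat.card_sigma]
  refine Nat.card_congr <| (Equiv.subtypeEquivRight fun p => ?_).trans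
    (Equiv.subtypeProdEquivSigmaSubtype fun (x : H) (α : MulAut K) => α • Subgroup.inclusion hHK x
      = Subgroup.inclusion hHK x)
  simp only [autPairs, Set.mem_ofPred_eq, inv_mul_eq_one, MulAut.smul_def, Subtype.ext_iff,
    Subgroup.coe_inclusion]
  exact eq_comm

theorem card_commutingPairs :
    Nat.card {p : H × K | (p.1 : G) * (p.2 : G) = (p.2 : G) * (p.1 : G)} =
      ∑ x : H, Nat.card (stabilizer (ConjAct K) (Subgroup.inclusion hHK x)) := by
  rw [← Nat.card_sigma]
  refine Nat.card_congr <| (Equiv.subtypeProdEquivSigmaSubtype fun (x : H) (k : K) =>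
    (x : G) * k = k * x).trans (Equiv.sigmaCongrRight fun x =>
      ConjAct.toConjAct.toEquiv.subtypeEquiv fun k => ?_)
  simp [ConjAct.smul_def, Subtype.ext_iff, eq_mul_inv_iff_mul_eq, eq_comm]

end Counting

/-- `Pr(H,Aut(K)) ≤ Pr(H,K)`, the relative commuting probability. -/
theorem stmt_13 {G : Type*} [Group G] [Fintype G] (H K : Subgroup G) (hHK : H ≤ K) :
    prAut H K hHK 1 ≤
      (Nat.card {p : ↥H × ↥K | (p.1 : G) * (p.2 : G) = (p.2 : G) * (p.1 : G)} : ℚ) /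
        ((Nat.card ↥H : ℚ) * (Nat.card ↥K : ℚ)) := by
  rw [prAut, card_autPairs_one, card_commutingPairs H K hHK, Nat.cast_sum, Nat.cast_sum,
    mul_comm, mul_comm (Nat.card H : ℚ), ← div_div, ← div_div]
  simp only [Finset.sum_div]
  gcongr ∑ x, ?_ / _ with x
  exact card_stabilizer_div_card_le_of_orbit_subset (orbit_conjAct_subset_orbit_mulAut _)
end

section
/- Let G be a finite group, H ⊆ K subgroups of G with H ≠ L(H,Aut(K)), let p be the smallest prime dividing |Aut(K)|, and set X_H := {x ∈ H : C_{Aut(K)}(x) = {id}}. Then Pr(H,Aut(K)) ≥ |L(H,Aut(K))|/|H| + (p·(|H| − |X_H| − |L(H,Aut(K))|) + |X_H|)/(|H|·|Aut(K)|), and Pr(H,Aut(K)) ≤ ((p − 1)·|L(H,Aut(K))| + |H|)/(p·|H|) − |X_H|·(|Aut(K)| − p)/(p·|H|·|Aut(K)|). -/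
open scoped Pointwise Classical

/-!
For `x ∈ H` the pairs `(x, α)` with `[x,α] = 1` are the `α` in the stabilizer `C_{Aut(K)}(x)`,
so `|H| |Aut(K)| Pr(H,Aut(K))` is the sum over `x ∈ H` of `|C_{Aut(K)}(x)|`. Each summand is a
divisor of `n = |Aut(K)|`: it equals `n` exactly on `L(H,Aut(K))`, equals `1` exactly on `X_H`,
and otherwise, being a divisor other than `1` and `n`, lies between `p` and `n / p` for the
smallest prime `p ∣ n`. Summing these bounds gives both inequalities.
-/

open Finset MulAction

namespace Nat

theorem minFac_le_of_dvd_of_ne_one {d n : ℕ} (hn : 0 < n) (hd : d ∣ n) (hd1 : d ≠ 1) :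
    n.minFac ≤ d :=
  minFac_le_of_dvd (by have := pos_of_dvd_of_pos hd hn; omega) hd

theorem minFac_mul_le_of_dvd_of_ne {d n : ℕ} (hn : 0 < n) (hd : d ∣ n) (hdn : d ≠ n) :
    n.minFac * d ≤ n := by
  obtain ⟨e, rfl⟩ := hd
  have he : e ≠ 1 := by rintro rfl; exact hdn (mul_one d).symm
  calc (d * e).minFac * d ≤ e * d :=
        Nat.mul_le_mul_right d (minFac_le_of_dvd_of_ne_one hn (dvd_mul_left e d) he)
    _ = d * e := mul_comm e d

theorem eq_minFac_of_forall_prime_dvd_le {p n : ℕ} (hp : p.Prime) (hpn : p ∣ n)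
    (hmin : ∀ r : ℕ, r.Prime → r ∣ n → p ≤ r) : p = n.minFac := by
  have hn1 : n ≠ 1 := by rintro rfl; exact hp.not_dvd_one hpn
  exact le_antisymm (hmin _ (minFac_prime hn1) (minFac_dvd n)) (minFac_le_of_dvd hp.two_le hpn)

end Nat

section DivisorSums

variable {R : Type*} [CommRing R] [LinearOrder R] [IsStrictOrderedRing R]

theorem minFac_add_indicator_le_of_dvd {d n : ℕ} (hn : 1 < n) (hd : d ∣ n) :
    (n.minFac : R) + (n - n.minFac) * (if d = n then 1 else 0)
        - (n.minFac - 1) * (if d = 1 then 1 else 0) ≤ d := by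
  by_cases hdn : d = n
  · subst hdn
    simp [hn.ne']
  by_cases hd1 : d = 1
  · simp [hd1, hn.ne]
  simp only [hdn, hd1, if_false, mul_zero, add_zero, sub_zero]
  exact_mod_cast Nat.minFac_le_of_dvd_of_ne_one (by omega) hd hd1

theorem minFac_mul_le_add_indicator_of_dvd {d n : ℕ} (hn : 1 < n) (hd : d ∣ n) :
    (n.minFac : R) * d ≤ n + (n.minFac - 1) * n * (if d = n then 1 else 0)
        - (n - n.minFac) * (if d = 1 then 1 else 0) := by
  by_cases hdn : d = n
  · subst hdn
    simp only [if_true, hn.ne', if_false]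
    exact le_of_eq (by ring)
  by_cases hd1 : d = 1
  · simp [hd1, hn.ne]
  simp only [hdn, hd1, if_false, mul_zero, add_zero, sub_zero]
  exact_mod_cast Nat.minFac_mul_le_of_dvd_of_ne (by omega) hd hdn

variable {ι : Type*} [Fintype ι] {f : ι → ℕ} {n : ℕ}

theorem le_sum_of_forall_dvd (hn : 1 < n) (hf : ∀ i, f i ∣ n) :
    (n.minFac : R) * Fintype.card ι + (n - n.minFac) * Nat.card {i // f i = n}
        - (n.minFac - 1) * Nat.card {i // f i = 1} ≤ ∑ i, (f i : R) := by
  calc _ = ∑ i, ((n.minFac : R) + (n - n.minFac) * (if f i = n then 1 else 0)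
          - (n.minFac - 1) * (if f i = 1 then 1 else 0)) := by
        rw [sum_sub_distrib, sum_add_distrib, ← mul_sum, ← mul_sum, sum_boole, sum_boole,
          sum_const, card_univ, nsmul_eq_mul, Nat.card_eq_fintype_card, Fintype.card_subtype,
          Nat.card_eq_fintype_card, Fintype.card_subtype]
        ring
    _ ≤ _ := sum_le_sum fun i _ ↦ minFac_add_indicator_le_of_dvd hn (hf i)

theorem minFac_mul_sum_le_of_forall_dvd (hn : 1 < n) (hf : ∀ i, f i ∣ n) :
    (n.minFac : R) * ∑ i, (f i : R) ≤ n * Fintype.card ι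
        + (n.minFac - 1) * n * Nat.card {i // f i = n}
        - (n - n.minFac) * Nat.card {i // f i = 1} := by
  calc _ ≤ ∑ i, ((n : R) + (n.minFac - 1) * n * (if f i = n then 1 else 0)
          - (n - n.minFac) * (if f i = 1 then 1 else 0)) := by
        rw [mul_sum]
        exact sum_le_sum fun i _ ↦ minFac_mul_le_add_indicator_of_dvd hn (hf i)
    _ = _ := by
        rw [sum_sub_distrib, sum_add_distrib, ← mul_sum, ← mul_sum, sum_boole, sum_boole,
          sum_const, card_univ, nsmul_eq_mul, Nat.card_eq_fintype_card, Fintype.card_subtype,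
          Nat.card_eq_fintype_card, Fintype.card_subtype]
        ring

end DivisorSums

theorem MulAction.card_setOf_smul_eq_eq_sum_card_stabilizer {A α ι : Type*} [Group A]
    [MulAction A α] [Fintype ι] [Finite A] (v : ι → α) :
    Nat.card {q : ι × A | q.2 • v q.1 = v q.1} = ∑ i, Nat.card (stabilizer A (v i)) :=
  (Nat.card_congr (Equiv.subtypeProdEquivSigmaSubtype fun i (a : A) ↦ a • v i = v i)).trans
    Nat.card_sigma

section AutStabilizer

variable {G : Type*} [Group G] {H K : Subgroup G} (hHK : H ≤ K)

theorem autPairs_one_eq :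
    autPairs H K hHK 1 =
      {q : H × MulAut K | q.2 • (⟨q.1, hHK q.1.2⟩ : K) = ⟨q.1, hHK q.1.2⟩} := by
  ext q
  simp only [autPairs, Set.mem_ofPred_eq, inv_mul_eq_one, MulAut.smul_def, Subtype.ext_iff]
  exact eq_comm

theorem mem_absCent_iff_card_stabilizer [Finite K] {x : H} :
    x ∈ absCent H K hHK ↔
      Nat.card (stabilizer (MulAut K) (⟨x, hHK x.2⟩ : K)) = Nat.card (MulAut K) := by
  rw [Subgroup.card_eq_iff_eq_top, Subgroup.eq_top_iff']
  rfl

theorem centAut_eq_one_iff_card_stabilizer {y : K} :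
    centAut K y = {1} ↔ Nat.card (stabilizer (MulAut K) y) = 1 := by
  change (stabilizer (MulAut K) y : Set (MulAut K)) = {1} ↔ _
  rw [Subgroup.card_eq_one, ← Subgroup.coe_bot, SetLike.coe_set_eq]

end AutStabilizer

theorem stmt_14_general {G : Type*} [Group G] [Fintype G] (H K : Subgroup G) (hHK : H ≤ K)
    (p : ℕ) (hp : p.Prime) (hpdvd : p ∣ Nat.card (MulAut ↥K))
    (hpmin : ∀ r : ℕ, r.Prime → r ∣ Nat.card (MulAut ↥K) → p ≤ r)
    (XH : Set ↥H) (hXH : XH = {x : ↥H | centAut K ⟨(x : G), hHK x.2⟩ = {1}}) :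
    prAut H K hHK 1 ≥
        (Nat.card (absCent H K hHK) : ℚ) / (Nat.card ↥H : ℚ) +
          ((p : ℚ) * ((Nat.card ↥H : ℚ) - (Nat.card XH : ℚ) -
                (Nat.card (absCent H K hHK) : ℚ)) + (Nat.card XH : ℚ)) /
            ((Nat.card ↥H : ℚ) * (Nat.card (MulAut ↥K) : ℚ)) ∧
      prAut H K hHK 1 ≤
        (((p : ℚ) - 1) * (Nat.card (absCent H K hHK) : ℚ) + (Nat.card ↥H : ℚ)) /
            ((p : ℚ) * (Nat.card ↥H : ℚ)) -
          (Nat.card XH : ℚ) * ((Nat.card (MulAut ↥K) : ℚ) - (p : ℚ)) /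
            ((p : ℚ) * (Nat.card ↥H : ℚ) * (Nat.card (MulAut ↥K) : ℚ)) := by
  set n := Nat.card (MulAut K)
  set f : H → ℕ := fun x ↦ Nat.card (stabilizer (MulAut K) (⟨x, hHK x.2⟩ : K))
  have hf : ∀ x, f x ∣ n := fun x ↦ Subgroup.card_subgroup_dvd_card _
  have hn : 1 < n := hp.one_lt.trans_le (Nat.le_of_dvd Nat.card_pos hpdvd)
  have hpn : p = n.minFac := Nat.eq_minFac_of_forall_prime_dvd_le hp hpdvd hpmin
  have hL : Nat.card (absCent H K hHK) = Nat.card {x // f x = n} :=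
    Nat.card_congr (Equiv.subtypeEquivRight fun _ ↦ mem_absCent_iff_card_stabilizer hHK)
  have hX : Nat.card XH = Nat.card {x // f x = 1} := by
    subst hXH
    exact Nat.card_congr (Equiv.subtypeEquivRight fun _ ↦ centAut_eq_one_iff_card_stabilizer)
  have hPr : prAut H K hHK 1 = (∑ x, (f x : ℚ)) / (Nat.card H * n) := by
    rw [prAut, autPairs_one_eq,
      card_setOf_smul_eq_eq_sum_card_stabilizer fun x : H ↦ (⟨x, hHK x.2⟩ : K), Nat.cast_sum]
  have lower := le_sum_of_forall_dvd (R := ℚ) hn hf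
  have upper := minFac_mul_sum_le_of_forall_dvd (R := ℚ) hn hf
  rw [← hpn, ← hL, ← hX, ← Nat.card_eq_fintype_card] at lower upper
  have hH : (0 : ℚ) < Nat.card H := by exact_mod_cast Nat.card_pos
  have hn0 : (0 : ℚ) < n := by exact_mod_cast Nat.card_pos
  have hp0 : (0 : ℚ) < p := by exact_mod_cast hp.pos
  rw [hPr]
  constructor
  · calc _ = ((Nat.card (absCent H K hHK) : ℚ) * n
          + (p * (Nat.card H - Nat.card XH - Nat.card (absCent H K hHK)) + Nat.card XH))
          / (Nat.card H * n) := by field_simp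
      _ ≤ _ := by gcongr; linarith
  · calc _ = (p * ∑ x, (f x : ℚ)) / (p * Nat.card H * n) := by field_simp
      _ ≤ (n * Nat.card H + (p - 1) * n * Nat.card (absCent H K hHK)
          - (n - p) * Nat.card XH) / (p * Nat.card H * n) := by gcongr
      _ = _ := by field_simp; ring

/-- Lower and upper bounds for `Pr(H,Aut(K))` in terms of the smallest prime `p` dividing
`|Aut(K)|` and `X_H = {x ∈ H : C_{Aut(K)}(x) = {id}}`. -/
theorem stmt_14 {G : Type*} [Group G] [Fintype G] (H K : Subgroup G) (hHK : H ≤ K)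
    (hne : absCent H K hHK ≠ ⊤)
    (p : ℕ) (hp : p.Prime) (hpdvd : p ∣ Nat.card (MulAut ↥K))
    (hpmin : ∀ r : ℕ, r.Prime → r ∣ Nat.card (MulAut ↥K) → p ≤ r)
    (XH : Set ↥H) (hXH : XH = {x : ↥H | centAut K ⟨(x : G), hHK x.2⟩ = {1}}) :
    prAut H K hHK 1 ≥
        (Nat.card (absCent H K hHK) : ℚ) / (Nat.card ↥H : ℚ) +
          ((p : ℚ) * ((Nat.card ↥H : ℚ) - (Nat.card XH : ℚ) -
                (Nat.card (absCent H K hHK) : ℚ)) + (Nat.card XH : ℚ)) /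
            ((Nat.card ↥H : ℚ) * (Nat.card (MulAut ↥K) : ℚ)) ∧
      prAut H K hHK 1 ≤
        (((p : ℚ) - 1) * (Nat.card (absCent H K hHK) : ℚ) + (Nat.card ↥H : ℚ)) /
            ((p : ℚ) * (Nat.card ↥H : ℚ)) -
          (Nat.card XH : ℚ) * ((Nat.card (MulAut ↥K) : ℚ) - (p : ℚ)) /
            ((p : ℚ) * (Nat.card ↥H : ℚ) * (Nat.card (MulAut ↥K) : ℚ)) :=
  stmt_14_general H K hHK p hp hpdvd hpmin XH hXH
end
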